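/- arXiv:1301.2133 — 4 statements merged into one kernel-verified Lean document; each statement's English description precedes it below -/
import Mathlib

section
/- Let B be a skew-symmetric r×r integer matrix, ex ⊆ {1,…,r} a set of indices (the mutable indices), k ∈ ex, and G ∈ ℤ^r an integer column vector such that B_j G = 0 for every j ∈ ex, where B_j denotes the j-th row of B. Let E = E_{B,k} be the mutation matrix, B' = E B Eᵀ and G' = Eᵀ G. Then (B')_j G' = 0 for every j ∈ ex; that is, the mutated vector G' is again a grading for the mutated exchange matrix B'. -/
/-!
The mutation matrix `E` is the identity with its `k`-th column replaced by a column whose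
`k`-th entry is `-1`, so `E` is an involution. Hence `B' G' = E B Eᵀ Eᵀ G = E (B G)`, and row
`j` of `E` is supported on `{j, k}`; for `j ∈ ex` both entries of `B G` there vanish, since
`k ∈ ex` as well.
-/

open Matrix

section MutationMatrix

variable {n R : Type*} [Fintype n] [DecidableEq n]

theorem mul_mul_transpose_mulVec_transpose_mulVec [CommSemiring R] {E : Matrix n n R}
    (hE : E * E = 1) (B : Matrix n n R) (v : n → R) :
    (E * B * Eᵀ) *ᵥ (Eᵀ *ᵥ v) = E *ᵥ (B *ᵥ v) := by
  have hET : Eᵀ * Eᵀ = 1 := by rw [← transpose_mul, hE, transpose_one]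
  rw [mulVec_mulVec, Matrix.mul_assoc (E * B), hET, Matrix.mul_one, mulVec_mulVec]

theorem updateCol_one_mulVec_apply [NonAssocSemiring R] (k : n) (c v : n → R) (i : n) :
    ((1 : Matrix n n R).updateCol k c *ᵥ v) i = Function.update v k 0 i + c i * v k := by
  rw [mulVec, dotProduct, ← Finset.add_sum_erase _ _ (Finset.mem_univ k), add_comm]
  congr 1
  · rw [Finset.sum_congr rfl fun s hs => by rw [updateCol_ne (Finset.ne_of_mem_erase hs)]]
    simp [one_apply, Function.update_apply]
  · simp

theorem updateCol_one_mul_self [Ring R] {k : n} {c : n → R} (hc : c k = -1) :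
    (1 : Matrix n n R).updateCol k c * (1 : Matrix n n R).updateCol k c = 1 := by
  refine mulVec_injective (funext fun v => ?_)
  have hk : ((1 : Matrix n n R).updateCol k c *ᵥ v) k = -v k := by
    simp [updateCol_one_mulVec_apply, hc]
  ext i
  rw [← mulVec_mulVec, one_mulVec, updateCol_one_mulVec_apply, hk]
  by_cases hi : i = k
  · simp [hi, hc]
  · simp [hi, updateCol_one_mulVec_apply]

theorem updateCol_one_mulVec_apply_eq_zero [NonAssocSemiring R] {j k : n} (c : n → R)
    {v : n → R} (hj : v j = 0) (hk : v k = 0) :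
    ((1 : Matrix n n R).updateCol k c *ᵥ v) j = 0 := by
  rw [updateCol_one_mulVec_apply, hk, mul_zero, add_zero, Function.update_apply]
  split_ifs <;> simp [hj]

end MutationMatrix

theorem mutated_grading_is_grading_general (r : ℕ)
    (B : Matrix (Fin r) (Fin r) ℤ)
    (ex : Finset (Fin r)) (k : Fin r) (hk : k ∈ ex)
    (G : Fin r → ℤ) (hG : ∀ j ∈ ex, ∑ i, B j i * G i = 0)
    (E : Matrix (Fin r) (Fin r) ℤ)
    (hE : ∀ i j, E i j =
      if j = k then (if i = k then -1 else max 0 (-(B i k)))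
      else (if i = j then 1 else 0))
    (B' : Matrix (Fin r) (Fin r) ℤ) (hB' : B' = E * B * E.transpose)
    (G' : Fin r → ℤ) (hG' : G' = E.transpose.mulVec G) :
    ∀ j ∈ ex, ∑ i, B' j i * G' i = 0 := by
  have hE_eq : E = (1 : Matrix (Fin r) (Fin r) ℤ).updateCol k (fun i => E i k) := by
    ext i j
    by_cases hj : j = k <;> simp [hE, one_apply, hj]
  have hEE : E * E = 1 := by
    rw [hE_eq]
    exact updateCol_one_mul_self (by simp [hE])
  intro j hj
  change (B' *ᵥ G') j = 0
  rw [hB', hG', mul_mul_transpose_mulVec_transpose_mulVec hEE, hE_eq]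
  exact updateCol_one_mulVec_apply_eq_zero _ (hG j hj) (hG k hk)

/-- If `G` is a grading for the skew-symmetric exchange matrix `B` with
respect to the set `ex` of mutable indices (i.e. `B_j G = 0` for all `j ∈ ex`), and
`k ∈ ex`, then the mutated vector `G' = Eᵀ G` is a grading for the mutated exchange
matrix `B' = E B Eᵀ`, i.e. `(B')_j G' = 0` for every `j ∈ ex`. -/
theorem mutated_grading_is_grading (r : ℕ) (hr : 0 < r)
    (B : Matrix (Fin r) (Fin r) ℤ) (hB : B.transpose = -B)
    (ex : Finset (Fin r)) (k : Fin r) (hk : k ∈ ex)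
    (G : Fin r → ℤ) (hG : ∀ j ∈ ex, ∑ i, B j i * G i = 0)
    (E : Matrix (Fin r) (Fin r) ℤ)
    (hE : ∀ i j, E i j =
      if j = k then (if i = k then -1 else max 0 (-(B i k)))
      else (if i = j then 1 else 0))
    (B' : Matrix (Fin r) (Fin r) ℤ) (hB' : B' = E * B * E.transpose)
    (G' : Fin r → ℤ) (hG' : G' = E.transpose.mulVec G) :
    ∀ j ∈ ex, ∑ i, B' j i * G' i = 0 :=
  mutated_grading_is_grading_general r B ex k hk G hG E hE B' hB' G' hG'
end

section
/- In the quantum torus setting, let B be a skew-symmetric r×r integer matrix, k ∈ {1,…,r} an index, and G ∈ ℤ^r with B_k G = 0 (B_k the k-th row of B). Set X̃_i = v^{G_i} X_i and let M̃ be the exchange monomial built from the X̃_i with the same matrix L. Then M̃(b_k^+) + M̃(b_k^−) = v^{b_k^+ · G} ( M(b_k^+) + M(b_k^−) ); that is, the quantum cluster variable obtained by mutating the rescaled cluster in direction k equals v^{G'_k} times the variable obtained by mutating the original cluster, where G'_k = b_k^+ · G = b_k^− · G. -/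
/-!
Rescaling `X i` by the central scalar `v ^ G i` multiplies the exchange monomial `M a` by
`v ^ (a · G)`, since scalars commute with everything and the normalising power of `v`
depends only on `a` and `L`. The two exchange vectors differ by the `k`-th column of `B`
(using `B k k = 0`), and skew-symmetry turns `B_k G = 0` into `(B i k)_i · G = 0`, so
both monomials pick up the same factor `v ^ (b_k^+ · G) = v ^ (b_k^- · G)`.
-/

section Rescaling

variable {R A : Type*} [CommSemiring R] [Semiring A] [Algebra R A]

lemma Units.map_algebraMap_mul_zpow (u : Rˣ) (x : Aˣ) (n : ℤ) :
    (Units.map (algebraMap R A).toMonoidHom u * x) ^ n =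
      Units.map (algebraMap R A).toMonoidHom (u ^ n) * x ^ n := by
  have hcomm : Commute (Units.map (algebraMap R A).toMonoidHom u) x :=
    Units.ext (Algebra.commutes _ _)
  rw [hcomm.mul_zpow, map_zpow]

variable {K : Type*} [Field K] [Algebra K A]

lemma Units.val_map_algebraMap_mk0_zpow (v : K) (hv : v ≠ 0) (n : ℤ) :
    ((Units.map (algebraMap K A).toMonoidHom (Units.mk0 v hv ^ n) : Aˣ) : A) =
      algebraMap K A (v ^ n) := by
  rw [Units.coe_map, Units.val_zpow_eq_zpow_val]
  rfl

lemma List.prod_map_algebraMap_zpow_mul {ι : Type*} {v : K} (hv : v ≠ 0) (e : ι → ℤ)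
    (f : ι → A) (l : List ι) :
    (l.map fun i => algebraMap K A (v ^ e i) * f i).prod =
      algebraMap K A (v ^ (l.map e).sum) * (l.map f).prod := by
  induction l with
  | nil => simp
  | cons i l ih =>
    simp only [List.map_cons, List.prod_cons, List.sum_cons, ih, zpow_add₀ hv, map_mul]
    rw [mul_assoc, ← mul_assoc (f i), ← Algebra.commutes, mul_assoc, mul_assoc]

lemma prod_finRange_rescaled_zpow {r : ℕ} {v : K} (hv : v ≠ 0) (G : Fin r → ℤ)
    {X Xt : Fin r → Aˣ}
    (hXt : ∀ i, Xt i = Units.map (algebraMap K A).toMonoidHom (Units.mk0 v hv ^ G i) * X i)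
    (a : Fin r → ℤ) :
    ((List.finRange r).map fun i => ((Xt i ^ a i : Aˣ) : A)).prod =
      algebraMap K A (v ^ ∑ i, a i * G i) *
        ((List.finRange r).map fun i => ((X i ^ a i : Aˣ) : A)).prod := by
  simp only [hXt, Units.map_algebraMap_mul_zpow, ← zpow_mul, Units.val_mul,
    Units.val_map_algebraMap_mk0_zpow, List.prod_map_algebraMap_zpow_mul hv,
    ← Fin.sum_univ_def, mul_comm (G _)]

end Rescaling

lemma sum_mul_eq_of_skew_of_row_mul_eq_zero {n : Type*} [Fintype n] [DecidableEq n]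
    {B : Matrix n n ℤ} (hB : B.transpose = -B) {k : n} {G : n → ℤ}
    (hG : ∑ i, B k i * G i = 0) {bp bm : n → ℤ}
    (hbp : ∀ i, bp i = if i = k then -1 else max (B i k) 0)
    (hbm : ∀ i, bm i = if i = k then -1 else max (-(B i k)) 0) :
    ∑ i, bp i * G i = ∑ i, bm i * G i := by
  have hcol : ∑ i, B i k * G i = 0 := by
    have h := congr_fun (congrArg (fun C => C.mulVec G) hB) k
    simpa [Matrix.mulVec, dotProduct, hG] using h
  have hdiff : ∀ i, bp i - bm i = B i k := by
    intro i
    rw [hbp, hbm]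
    split_ifs with hik
    · subst hik
      have h := congr_fun₂ hB i i
      simp only [Matrix.transpose_apply, Matrix.neg_apply] at h
      omega
    · exact max_zero_sub_max_neg_zero_eq_self _
  rw [← sub_eq_zero, ← Finset.sum_sub_distrib]
  simpa only [← sub_mul, hdiff] using hcol

theorem rescaled_mutation_general (K : Type*) [Field K] (A : Type*) [Ring A] [Algebra K A]
    (v : K) (hv : v ≠ 0) (r : ℕ)
    (L : Matrix (Fin r) (Fin r) ℤ)
    (X : Fin r → Aˣ)
    (B : Matrix (Fin r) (Fin r) ℤ) (hB : B.transpose = -B) (k : Fin r)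
    (G : Fin r → ℤ) (hG : ∑ i, B k i * G i = 0)
    (Xt : Fin r → Aˣ)
    (hXt : ∀ i, Xt i =
      Units.map (algebraMap K A).toMonoidHom (Units.mk0 v hv ^ G i) * X i)
    (M Mt : (Fin r → ℤ) → A)
    (hM : ∀ a, M a =
      algebraMap K A (v ^ (∑ i, ∑ j, if i < j then a i * a j * L j i else 0)) *
        ((List.finRange r).map (fun i => ((X i ^ a i : Aˣ) : A))).prod)
    (hMt : ∀ a, Mt a =
      algebraMap K A (v ^ (∑ i, ∑ j, if i < j then a i * a j * L j i else 0)) *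
        ((List.finRange r).map (fun i => ((Xt i ^ a i : Aˣ) : A))).prod)
    (bkp bkm : Fin r → ℤ)
    (hbkp : ∀ i, bkp i = if i = k then -1 else max (B i k) 0)
    (hbkm : ∀ i, bkm i = if i = k then -1 else max (-(B i k)) 0) :
    Mt bkp + Mt bkm = algebraMap K A (v ^ (∑ i, bkp i * G i)) * (M bkp + M bkm) := by
  have hrescale : ∀ a, Mt a = algebraMap K A (v ^ ∑ i, a i * G i) * M a := by
    intro a
    rw [hMt, hM, prod_finRange_rescaled_zpow hv G hXt, ← mul_assoc, ← mul_assoc,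
      ← map_mul, ← map_mul, mul_comm]
  rw [hrescale, hrescale, sum_mul_eq_of_skew_of_row_mul_eq_zero hB hG hbkp hbkm, mul_add]

/-- In the quantum torus setting, if `G` is a grading in direction `k`
(`B_k G = 0`), then the quantum cluster variable obtained by mutating the rescaled
cluster in direction `k` equals `v^(b_k^+ · G)` times the variable obtained by mutating
the original cluster:
`M̃(b_k^+) + M̃(b_k^-) = v^(b_k^+ · G) (M(b_k^+) + M(b_k^-))`. -/
theorem rescaled_mutation (K : Type*) [Field K] (A : Type*) [Ring A] [Algebra K A]
    (v : K) (hv : v ≠ 0) (r : ℕ) (hr : 0 < r)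
    (L : Matrix (Fin r) (Fin r) ℤ) (hL : L.transpose = -L)
    (X : Fin r → Aˣ)
    (hX : ∀ i j, (X i : A) * (X j : A) =
      algebraMap K A ((v ^ 2) ^ L i j) * ((X j : A) * (X i : A)))
    (B : Matrix (Fin r) (Fin r) ℤ) (hB : B.transpose = -B) (k : Fin r)
    (G : Fin r → ℤ) (hG : ∑ i, B k i * G i = 0)
    (Xt : Fin r → Aˣ)
    (hXt : ∀ i, Xt i =
      Units.map (algebraMap K A).toMonoidHom (Units.mk0 v hv ^ G i) * X i)
    (M Mt : (Fin r → ℤ) → A)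
    (hM : ∀ a, M a =
      algebraMap K A (v ^ (∑ i, ∑ j, if i < j then a i * a j * L j i else 0)) *
        ((List.finRange r).map (fun i => ((X i ^ a i : Aˣ) : A))).prod)
    (hMt : ∀ a, Mt a =
      algebraMap K A (v ^ (∑ i, ∑ j, if i < j then a i * a j * L j i else 0)) *
        ((List.finRange r).map (fun i => ((Xt i ^ a i : Aˣ) : A))).prod)
    (bkp bkm : Fin r → ℤ)
    (hbkp : ∀ i, bkp i = if i = k then -1 else max (B i k) 0)
    (hbkm : ∀ i, bkm i = if i = k then -1 else max (-(B i k)) 0) :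
    Mt bkp + Mt bkm = algebraMap K A (v ^ (∑ i, bkp i * G i)) * (M bkp + M bkm) :=
  rescaled_mutation_general K A v hv r L X B hB k G hG Xt hXt M Mt hM hMt bkp bkm hbkp hbkm
end

section
/- Let K be a field, A an associative unital K-algebra, v a nonzero element of K, and q = v². Let X_1,…,X_r and z be units of A with z X_j = q^{t_j} X_j z for integers t_1,…,t_r. Let a_1,…,a_r and u_1,…,u_r be integers and set X̃_i = v^{t_i u_i} X_i z^{u_i}. Then Π_{i=1}^{r} X̃_i^{a_i} = q^{Σ_{1≤i<j≤r} a_i a_j t_j u_i} · v^{Σ_{i=1}^{r} a_i² t_i u_i} · X_1^{a_1} ⋯ X_r^{a_r} · z^{Σ_{i=1}^{r} a_i u_i}, where all products over indices are taken in increasing order. -/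
/-!
Conjugation by `z` rescales `X j` by `q ^ t j`, whence
`z ^ m * X j ^ n = q ^ (t j * m * n) • (X j ^ n * z ^ m)`. Consequently, when `z x = s² x z`,
the map `n ↦ s ^ n ^ 2 • (x ^ n * z ^ n)` is a homomorphism `ℤ → G`; this computes each power
`X̃ i ^ a i`. The ordered product is then put in normal form by induction on `r`, moving each
`z ^ (a i * u i)` to the right past the `X j ^ a j` with `j > i`, each passage costing
`q ^ (a i * a j * t j * u i)`. Everything happens in a group with a central action of scalars;
the theorem is the case of `Aˣ` acted on by its center, into which `Kˣ` maps.
-/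

theorem apply_eq_apply_one_zpow_of_map_add {G : Type*} [Group G] {f : ℤ → G}
    (hf : ∀ m n, f (m + n) = f m * f n) (n : ℤ) : f n = f 1 ^ n := by
  induction n using Int.induction_on with
  | zero => simpa using hf 0 0
  | succ n ih => rw [hf, ih, zpow_add_one]
  | pred n ih => rw [zpow_sub_one, ← ih, eq_mul_inv_iff_mul_eq, ← hf, sub_add_cancel]

theorem Fin.sum_sum_ite_lt_succ {β : Type*} [AddCommMonoid β] {r : ℕ}
    (f : Fin (r + 1) → Fin (r + 1) → β) :
    ∑ i, ∑ j, (if i < j then f i j else 0) =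
      ∑ j : Fin r, f 0 j.succ + ∑ i : Fin r, ∑ j : Fin r, if i < j then f i.succ j.succ else 0 := by
  simp [Fin.sum_univ_succ, Fin.succ_lt_succ_iff]

section CentralAction

variable {M G : Type*} [Group M] [Group G] [MulAction M G] [IsScalarTower M G G]
  [SMulCommClass M G G] {s : M} {z x : G}

theorem mul_zpow_eq_smul_of_mul_eq_smul (h : z * x = s • (x * z)) (n : ℤ) :
    z * x ^ n = s ^ n • (x ^ n * z) := by
  have hconj : z * x * z⁻¹ = s • x := by rw [h, smul_mul_assoc, mul_inv_cancel_right]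
  have hconj_zpow : z * x ^ n * z⁻¹ = s ^ n • x ^ n := by rw [← conj_zpow, hconj, smul_zpow]
  rw [← smul_mul_assoc, ← hconj_zpow, inv_mul_cancel_right]

theorem zpow_mul_zpow_eq_smul_of_mul_eq_smul (h : z * x = s • (x * z)) (m n : ℤ) :
    z ^ m * x ^ n = s ^ (m * n) • (x ^ n * z ^ m) := by
  have hxz : x * z = s⁻¹ • (z * x) := by rw [h, inv_smul_smul]
  have hzm : z ^ m * x = s ^ m • (x * z ^ m) := by
    rw [mul_zpow_eq_smul_of_mul_eq_smul hxz m, inv_zpow, smul_inv_smul]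
  rw [mul_zpow_eq_smul_of_mul_eq_smul hzm n, zpow_mul]

theorem smul_mul_zpow_of_mul_eq_sq_smul (h : z * x = s ^ 2 • (x * z)) (n : ℤ) :
    (s • x * z) ^ n = s ^ n ^ 2 • (x ^ n * z ^ n) := by
  let f : ℤ → G := fun k => s ^ k ^ 2 • (x ^ k * z ^ k)
  have hf : ∀ m n, f (m + n) = f m * f n := by
    intro m n
    have hzx := zpow_mul_zpow_eq_smul_of_mul_eq_smul h m n
    simp only [f, smul_mul_assoc, mul_smul_comm, smul_smul, ← mul_assoc]
    rw [mul_assoc (x ^ m), hzx]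
    simp only [smul_mul_assoc, mul_smul_comm, smul_smul, ← mul_assoc]
    congr 1 <;> group
  simpa [f, smul_mul_assoc] using (apply_eq_apply_one_zpow_of_map_add hf n).symm

theorem mul_prod_ofFn_eq_smul_of_mul_eq_smul {r : ℕ} {X : Fin r → G} {c : Fin r → ℤ}
    (h : ∀ j, z * X j = s ^ c j • (X j * z)) :
    z * (List.ofFn X).prod = s ^ (∑ j, c j) • ((List.ofFn X).prod * z) := by
  induction r with
  | zero => simp
  | succ r ih =>
    rw [List.ofFn_succ, List.prod_cons, Fin.sum_univ_succ, ← mul_assoc, h 0, smul_mul_assoc,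
      mul_assoc, mul_assoc, ih fun j => h j.succ, mul_smul_comm, smul_smul, ← zpow_add]

theorem prod_ofFn_smul_mul_zpow_zpow {r : ℕ} (v : M) (z : G) (X : Fin r → G) (t a u : Fin r → ℤ)
    (hz : ∀ j, z * X j = (v ^ 2) ^ t j • (X j * z)) :
    (List.ofFn fun i => (v ^ (t i * u i) • X i * z ^ u i) ^ a i).prod =
      ((v ^ 2) ^ (∑ i, ∑ j, if i < j then a i * a j * t j * u i else 0) *
          v ^ (∑ i, a i ^ 2 * t i * u i)) •
        ((List.ofFn fun i => X i ^ a i).prod * z ^ (∑ i, a i * u i)) := by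
  induction r with
  | zero => simp
  | succ r ih =>
    have hhead : (v ^ (t 0 * u 0) • X 0 * z ^ u 0) ^ a 0 =
        v ^ (t 0 * u 0 * a 0 ^ 2) • (X 0 ^ a 0 * z ^ (u 0 * a 0)) := by
      have hzu : z ^ u 0 * X 0 = (v ^ (t 0 * u 0)) ^ 2 • (X 0 * z ^ u 0) := by
        rw [← zpow_one (X 0), zpow_mul_zpow_eq_smul_of_mul_eq_smul (hz 0)]
        congr 1
        group
      rw [smul_mul_zpow_of_mul_eq_sq_smul hzu, ← zpow_mul, ← zpow_mul]
    have hpush : z ^ (u 0 * a 0) * (List.ofFn fun i => X i.succ ^ a i.succ).prod =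
        (v ^ 2) ^ (∑ j : Fin r, a 0 * a j.succ * t j.succ * u 0) •
          ((List.ofFn fun i => X i.succ ^ a i.succ).prod * z ^ (u 0 * a 0)) :=
      mul_prod_ofFn_eq_smul_of_mul_eq_smul fun j => by
        rw [zpow_mul_zpow_eq_smul_of_mul_eq_smul (hz j.succ), ← zpow_mul]
        ring_nf
    rw [List.ofFn_succ, List.prod_cons, ih (fun i => X i.succ) (fun i => t i.succ)
      (fun i => a i.succ) (fun i => u i.succ) fun j => hz j.succ, hhead, smul_mul_smul_comm,
      mul_assoc (X 0 ^ a 0), ← mul_assoc (z ^ _), hpush, smul_mul_assoc, mul_smul_comm, smul_smul,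
      List.ofFn_succ, List.prod_cons]
    congr 1
    · simp only [← zpow_natCast, ← zpow_mul, ← zpow_add]
      rw [Fin.sum_sum_ite_lt_succ, Fin.sum_univ_succ]
      ring_nf
    · rw [Fin.sum_univ_succ, zpow_add, mul_comm (a 0)]
      simp only [mul_assoc]

end CentralAction

theorem Units.val_prod_map_finRange {A : Type*} [Monoid A] {r : ℕ} (f : Fin r → Aˣ) :
    ((List.finRange r).map fun i => (f i : A)).prod = ((List.ofFn f).prod : A) := by
  rw [List.ofFn_eq_map, ← Units.coeHom_apply, map_list_prod, List.map_map]
  rfl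

theorem Units.map_algebraMap_mem_center (K A : Type*) [CommSemiring K] [Semiring A] [Algebra K A]
    (c : Kˣ) : Units.map (algebraMap K A).toMonoidHom c ∈ Subgroup.center Aˣ :=
  Subgroup.mem_center_iff.mpr fun _ => Units.ext (Algebra.commutes _ _).symm

/-- With `z X j = q^(t j) X j z`, `q = v²`, and
`X̃ i = v^(t i * u i) X i z^(u i)`, the ordered product of the `X̃ i ^ a i` equals
`q^(Σ_{i<j} a i a j t j u i) · v^(Σ_i a i² t i u i) · X 1^(a 1) ⋯ X r^(a r) · z^(Σ_i a i u i)`. -/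
theorem rescaled_product_formula (K : Type*) [Field K] (A : Type*) [Ring A] [Algebra K A]
    (v : K) (hv : v ≠ 0) (r : ℕ)
    (X : Fin r → Aˣ) (z : Aˣ) (t : Fin r → ℤ)
    (hz : ∀ j, (z : A) * (X j : A) = algebraMap K A ((v ^ 2) ^ t j) * ((X j : A) * (z : A)))
    (a u : Fin r → ℤ)
    (Xt : Fin r → Aˣ)
    (hXt : ∀ i, Xt i =
      Units.map (algebraMap K A).toMonoidHom (Units.mk0 v hv ^ (t i * u i)) * X i * z ^ u i) :
    ((List.finRange r).map (fun i => ((Xt i ^ a i : Aˣ) : A))).prod =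
      algebraMap K A ((v ^ 2) ^ (∑ i, ∑ j, if i < j then a i * a j * t j * u i else 0) *
          v ^ (∑ i, a i ^ 2 * t i * u i)) *
        (((List.finRange r).map (fun i => ((X i ^ a i : Aˣ) : A))).prod *
          ((z ^ (∑ i, a i * u i) : Aˣ) : A)) := by
  let φ : Kˣ →* Subgroup.center Aˣ := (Units.map (algebraMap K A).toMonoidHom).codRestrict _
    (Units.map_algebraMap_mem_center K A)
  have hφ : ∀ (c : Kˣ) (g : Aˣ), ((φ c • g : Aˣ) : A) = algebraMap K A c * g := fun _ _ => rfl
  have hXt_smul : Xt = fun i => φ (Units.mk0 v hv) ^ (t i * u i) • X i * z ^ u i :=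
    funext fun i => by rw [hXt i, ← map_zpow]; rfl
  have hz_smul : ∀ j, z * X j = (φ (Units.mk0 v hv) ^ 2) ^ t j • (X j * z) := fun j =>
    Units.ext <| by simpa [← map_pow, ← map_zpow, hφ, Units.val_zpow_eq_zpow_val] using hz j
  rw [hXt_smul, Units.val_prod_map_finRange, Units.val_prod_map_finRange,
    prod_ofFn_smul_mul_zpow_zpow _ z X t a u hz_smul, ← map_pow, ← map_zpow, ← map_zpow, ← map_mul,
    hφ]
  simp [Units.val_zpow_eq_zpow_val]
end

section
/- In the quantum torus setting with extending unit z, let B be a skew-symmetric r×r integer matrix and k ∈ {1,…,r} an index such that B_k t = 0 and B_k u = 0, where B_k is the k-th row of B. Set X̃_i = v^{t_i u_i} X_i z^{u_i}, L̃ = L − t∧u, and let M̃ denote the exchange monomial built from the X̃_i with the matrix L̃. Then M̃(b_k^+) + M̃(b_k^−) = v^{t'_k u'_k} · ( M(b_k^+) + M(b_k^−) ) · z^{u'_k}, where t'_k = b_k^+ · t = b_k^− · t and u'_k = b_k^+ · u = b_k^− · u; that is, mutation of a re-scaled seed in direction k produces the re-scaling (by the mutated gradings) of the mutated variable. -/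
/-!
For every exponent vector `a` one has `M̃(a) = v^{(a·t)(a·u)} M(a) z^{a·u}`. Indeed
`X̃_i^{a_i} = v^{a_i² t_i u_i} X_i^{a_i} z^{a_i u_i}`, and pushing all powers of `z` in
`∏ X̃_i^{a_i}` to the right produces `v^{2 Σ_{i<j} a_i u_i a_j t_j}`; together with the change of
`L` into `L̃` these scalars assemble into `v^{(a·t)(a·u)}`. Since `B` is skew-symmetric,
`b_k^+ - b_k^- = -B_k`, so `B_k t = B_k u = 0` gives both mutation vectors the same gradings, and
the identities for `a = b_k^±` add up.
-/

section QuasiCommuting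

variable {G : Type*} [Group G]

theorem eq_zpow_of_map_add {f : ℤ → G} (hf : ∀ m n, f (m + n) = f m * f n) (m : ℤ) :
    f m = f 1 ^ m := by
  let φ : Multiplicative ℤ →* G :=
    { toFun := fun a => f a.toAdd
      map_one' := by simpa using hf 0 0
      map_mul' := fun a b => hf a.toAdd b.toAdd }
  simpa [φ, ← ofAdd_zsmul] using φ.map_zpow (Multiplicative.ofAdd 1) m

variable {c x y : G}

theorem commute_zpow_of_mem_center (hc : c ∈ Subgroup.center G) (g : G) (n : ℤ) :
    Commute g (c ^ n) :=
  Commute.zpow_right (Subgroup.mem_center_iff.mp hc g) n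

theorem mul_zpow_eq_of_mul_eq_center_mul (hc : c ∈ Subgroup.center G)
    (h : x * y = c * (y * x)) (n : ℤ) : x * y ^ n = c ^ n * (y ^ n * x) := by
  have hxy : SemiconjBy x y (c * y) := by rw [SemiconjBy, h, mul_assoc]
  rw [(hxy.zpow_right n).eq, Commute.mul_zpow (Subgroup.mem_center_iff.mp hc y).symm, mul_assoc]

theorem zpow_mul_zpow_eq_of_mul_eq_center_mul (hc : c ∈ Subgroup.center G)
    (h : x * y = c * (y * x)) (m n : ℤ) : x ^ m * y ^ n = c ^ (m * n) * (y ^ n * x ^ m) := by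
  have hyx : y ^ n * x = c ^ (-n) * (x * y ^ n) := by
    rw [mul_zpow_eq_of_mul_eq_center_mul hc h n, ← mul_assoc, ← zpow_add, neg_add_cancel,
      zpow_zero, one_mul]
  rw [mul_zpow_eq_of_mul_eq_center_mul (Subgroup.zpow_mem _ hc _) hyx m, ← zpow_mul,
    ← mul_assoc, ← zpow_add, show m * n + -n * m = 0 by ring, zpow_zero, one_mul]

theorem mul_mul_zpow_eq_of_mul_eq_center_sq_mul (hc : c ∈ Subgroup.center G)
    (h : y * x = c ^ 2 * (x * y)) (m : ℤ) : (c * x * y) ^ m = c ^ (m * m) * (x ^ m * y ^ m) := by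
  have hc2 : c ^ 2 ∈ Subgroup.center G := Subgroup.pow_mem _ hc 2
  have hcomm := commute_zpow_of_mem_center hc
  -- `m ↦ c^(m*m) * (x^m * y^m)` is a homomorphism from `ℤ`
  have hadd : ∀ m n : ℤ, c ^ ((m + n) * (m + n)) * (x ^ (m + n) * y ^ (m + n))
      = c ^ (m * m) * (x ^ m * y ^ m) * (c ^ (n * n) * (x ^ n * y ^ n)) := by
    intro m n
    have hyx := zpow_mul_zpow_eq_of_mul_eq_center_mul hc2 h m n
    rw [← zpow_natCast, ← zpow_mul] at hyx
    symm
    calc c ^ (m * m) * (x ^ m * y ^ m) * (c ^ (n * n) * (x ^ n * y ^ n))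
        = c ^ (m * m) * c ^ (n * n) * (x ^ m * ((y ^ m * x ^ n) * y ^ n)) := by
          rw [mul_assoc, (hcomm _ (n * n)).left_comm]; simp only [mul_assoc]
      _ = c ^ (m * m) * c ^ (n * n)
            * (c ^ (2 * (m * n)) * (x ^ m * x ^ n * (y ^ m * y ^ n))) := by
          rw [hyx]; simp only [mul_assoc, Nat.cast_ofNat]; rw [(hcomm (x ^ m) _).left_comm]
      _ = c ^ ((m + n) * (m + n)) * (x ^ (m + n) * y ^ (m + n)) := by
          rw [← mul_assoc, ← zpow_add, ← zpow_add, ← zpow_add, ← zpow_add]; ring_nf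
  simpa [mul_assoc] using
    (eq_zpow_of_map_add (f := fun m => c ^ (m * m) * (x ^ m * y ^ m)) hadd m).symm

end QuasiCommuting

def List.sumOrderedPairs {ι M : Type*} [AddCommMonoid M] (f : ι → ι → M) : List ι → M
  | [] => 0
  | i :: l => (l.map (f i)).sum + l.sumOrderedPairs f

theorem List.sumOrderedPairs_eq_sum_sum_ite {ι M : Type*} [AddCommMonoid M] [LinearOrder ι]
    (f : ι → ι → M) {l : List ι} (hl : l.Pairwise (· < ·)) :
    l.sumOrderedPairs f = ∑ i ∈ l.toFinset, ∑ j ∈ l.toFinset, if i < j then f i j else 0 := by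
  induction l with
  | nil => rfl
  | cons i l ih =>
    obtain ⟨hi, hl⟩ := List.pairwise_cons.mp hl
    have hil : i ∉ l.toFinset := fun h => lt_irrefl i (hi i (List.mem_toFinset.mp h))
    have hrow : ∑ j ∈ insert i l.toFinset, (if i < j then f i j else 0) = (l.map (f i)).sum := by
      rw [Finset.sum_insert hil, if_neg (lt_irrefl i), zero_add,
        Finset.sum_congr rfl fun j hj => if_pos (hi j (List.mem_toFinset.mp hj)),
        List.sum_toFinset _ (hl.imp ne_of_lt)]
    have hcol : ∀ i' ∈ l.toFinset, ∑ j ∈ insert i l.toFinset, (if i' < j then f i' j else 0)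
        = ∑ j ∈ l.toFinset, if i' < j then f i' j else 0 := fun i' hi' => by
      rw [Finset.sum_insert hil, if_neg (lt_asymm (hi i' (List.mem_toFinset.mp hi'))), zero_add]
    rw [List.sumOrderedPairs, List.toFinset_cons, Finset.sum_insert hil, hrow,
      Finset.sum_congr rfl hcol, ih hl]

theorem List.sumOrderedPairs_finRange {M : Type*} [AddCommMonoid M] {n : ℕ}
    (f : Fin n → Fin n → M) :
    (List.finRange n).sumOrderedPairs f = ∑ i, ∑ j, if i < j then f i j else 0 := by
  rw [List.sumOrderedPairs_eq_sum_sum_ite f (List.pairwise_lt_finRange n), List.toFinset_finRange]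

section Rescaling

variable {G ι : Type*} [Group G] {ω z : G} {X : ι → G} {t : ι → ℤ}

theorem zpow_mul_list_prod_zpow (hω : ω ∈ Subgroup.center G)
    (hz : ∀ i, z * X i = ω ^ (2 * t i) * (X i * z)) (p : ℤ) (a : ι → ℤ) (l : List ι) :
    z ^ p * (l.map fun i => X i ^ a i).prod
      = ω ^ (2 * p * (l.map fun i => a i * t i).sum)
        * ((l.map fun i => X i ^ a i).prod * z ^ p) := by
  induction l with
  | nil => simp
  | cons i l ih =>
    have hzX := zpow_mul_zpow_eq_of_mul_eq_center_mul (Subgroup.zpow_mem _ hω _) (hz i) p (a i)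
    rw [← zpow_mul] at hzX
    simp only [List.map_cons, List.prod_cons, List.sum_cons]
    rw [← mul_assoc, hzX, mul_assoc (ω ^ _), mul_assoc (X i ^ a i), ih,
      (commute_zpow_of_mem_center hω _ _).left_comm, ← mul_assoc, ← zpow_add]
    simp only [mul_assoc]
    congr 2
    ring

theorem rescaled_zpow (hω : ω ∈ Subgroup.center G)
    (hz : ∀ i, z * X i = ω ^ (2 * t i) * (X i * z)) (u : ι → ℤ) (i : ι) (m : ℤ) :
    (ω ^ (t i * u i) * X i * z ^ u i) ^ m
      = ω ^ (m * m * (t i * u i)) * (X i ^ m * z ^ (u i * m)) := by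
  have h : z ^ u i * X i = (ω ^ (t i * u i)) ^ 2 * (X i * z ^ u i) := by
    have := zpow_mul_zpow_eq_of_mul_eq_center_mul (Subgroup.zpow_mem _ hω _) (hz i) (u i) 1
    rw [zpow_one, mul_one, ← zpow_mul] at this
    rwa [← zpow_natCast, ← zpow_mul, Nat.cast_ofNat, show t i * u i * 2 = 2 * t i * u i by ring]
  rw [mul_mul_zpow_eq_of_mul_eq_center_sq_mul (Subgroup.zpow_mem _ hω _) h m, ← zpow_mul,
    ← zpow_mul, mul_comm (t i * u i)]

theorem list_prod_rescaled_zpow (hω : ω ∈ Subgroup.center G)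
    (hz : ∀ i, z * X i = ω ^ (2 * t i) * (X i * z)) (u a : ι → ℤ) (l : List ι) :
    (l.map fun i => (ω ^ (t i * u i) * X i * z ^ u i) ^ a i).prod
      = ω ^ ((l.map fun i => a i * a i * (t i * u i)).sum
          + 2 * l.sumOrderedPairs (fun i j => a i * u i * (a j * t j)))
        * ((l.map fun i => X i ^ a i).prod * z ^ (l.map fun i => a i * u i).sum) := by
  induction l with
  | nil => simp [List.sumOrderedPairs]
  | cons i l ih =>
    set P := (l.map fun i => X i ^ a i).prod
    have hω' := commute_zpow_of_mem_center hω
    simp only [List.map_cons, List.prod_cons]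
    rw [rescaled_zpow hω hz, ih]
    calc
      _ = ω ^ (a i * a i * (t i * u i)) * ω ^ ((l.map fun i => a i * a i * (t i * u i)).sum
            + 2 * l.sumOrderedPairs (fun i j => a i * u i * (a j * t j)))
          * (X i ^ a i * (z ^ (u i * a i) * P) * z ^ (l.map fun i => a i * u i).sum) := by
        rw [mul_assoc (ω ^ _), (hω' _ _).left_comm]
        simp only [mul_assoc]
      _ = _ := by
        rw [zpow_mul_list_prod_zpow hω hz, (hω' _ _).left_comm, mul_assoc (ω ^ _) _ (z ^ _),
          ← mul_assoc _ (ω ^ _), ← zpow_add, ← zpow_add]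
        simp only [List.sum_cons, List.sumOrderedPairs, mul_assoc,
          ← zpow_add, List.sum_map_mul_left]
        congr 2
        · ring
        · rw [mul_comm (u i)]

end Rescaling

theorem sum_sum_eq_sum_sum_lt_add_sum_diag {ι M : Type*} [Fintype ι] [LinearOrder ι]
    [AddCommMonoid M] (f : ι → ι → M) :
    ∑ i, ∑ j, f i j = (∑ i, ∑ j, if i < j then f i j + f j i else 0) + ∑ i, f i i := by
  have hsplit : ∀ i j, f i j
      = ((if i < j then f i j else 0) + if j < i then f i j else 0)
        + if i = j then f i j else 0 := by
    intro i j
    rcases lt_trichotomy i j with h | rfl | h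
    · simp [h, h.ne, h.not_gt]
    · simp
    · simp [h, h.ne', h.not_gt]
  simp only [ite_add_zero, Finset.sum_add_distrib]
  conv_lhs => enter [2, i, 2, j]; rw [hsplit i j]
  simp only [Finset.sum_add_distrib, Finset.sum_ite_eq, Finset.mem_univ, if_true]
  rw [Finset.sum_comm (f := fun i j => if j < i then f i j else 0)]

theorem exchange_exponent_rescale {ι R : Type*} [Fintype ι] [LinearOrder ι] [CommRing R]
    (t u a : ι → R) (L Lt : ι → ι → R) (hLt : ∀ i j, Lt i j = L i j - (t i * u j - t j * u i)) :
    (∑ i, ∑ j, if i < j then a i * a j * Lt j i else 0)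
        + (∑ i, a i * a i * (t i * u i)
          + 2 * ∑ i, ∑ j, (if i < j then a i * u i * (a j * t j) else 0))
      = (∑ i, a i * t i) * (∑ i, a i * u i)
        + ∑ i, ∑ j, if i < j then a i * a j * L j i else 0 := by
  have hoff : (∑ i, ∑ j, if i < j then a i * a j * Lt j i else 0)
        + 2 * (∑ i, ∑ j, if i < j then a i * u i * (a j * t j) else 0)
      = (∑ i, ∑ j, if i < j then a i * t i * (a j * u j) + a j * t j * (a i * u i) else 0)
        + ∑ i, ∑ j, if i < j then a i * a j * L j i else 0 := by
    simp only [Finset.mul_sum, ← Finset.sum_add_distrib]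
    refine Finset.sum_congr rfl fun i _ => Finset.sum_congr rfl fun j _ => ?_
    split_ifs
    · rw [hLt]; ring
    · ring
  have hdiag : ∑ i, a i * t i * (a i * u i) = ∑ i, a i * a i * (t i * u i) :=
    Finset.sum_congr rfl fun i _ => by ring
  rw [Finset.sum_mul_sum, sum_sum_eq_sum_sum_lt_add_sum_diag fun i j => a i * t i * (a j * u j)]
  linear_combination hoff - hdiag

section ExchangeMonomial

variable {K A : Type*} [Field K] [Ring A] [Algebra K A]

theorem val_units_map_algebraMap_zpow (w : Kˣ) (n : ℤ) :
    ((Units.map (algebraMap K A).toMonoidHom w ^ n : Aˣ) : A) = algebraMap K A ((w : K) ^ n) := by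
  rw [← map_zpow, Units.coe_map, Units.val_zpow_eq_zpow_val]
  rfl

theorem units_map_algebraMap_mem_center (w : Kˣ) :
    Units.map (algebraMap K A).toMonoidHom w ∈ Subgroup.center Aˣ :=
  Subgroup.mem_center_iff.mpr fun g => Units.ext (Algebra.commutes (w : K) (g : A)).symm

def exchangeMonomial {r : ℕ} (v : K) (L : Matrix (Fin r) (Fin r) ℤ) (X : Fin r → Aˣ)
    (a : Fin r → ℤ) : A :=
  algebraMap K A (v ^ (∑ i, ∑ j, if i < j then a i * a j * L j i else 0)) *
    ((List.finRange r).map (fun i => ((X i ^ a i : Aˣ) : A))).prod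

theorem exchangeMonomial_rescale {r : ℕ} {v : K} (hv : v ≠ 0) {L Lt : Matrix (Fin r) (Fin r) ℤ}
    {X Xt : Fin r → Aˣ} {t u : Fin r → ℤ} {z : Aˣ}
    (hz : ∀ i, (z : A) * (X i : A) = algebraMap K A ((v ^ 2) ^ t i) * ((X i : A) * (z : A)))
    (hXt : ∀ i, Xt i =
      Units.map (algebraMap K A).toMonoidHom (Units.mk0 v hv ^ (t i * u i)) * X i * z ^ u i)
    (hLt : ∀ i j, Lt i j = L i j - (t i * u j - t j * u i)) (a : Fin r → ℤ) :
    exchangeMonomial v Lt Xt a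
      = algebraMap K A (v ^ ((∑ i, a i * t i) * (∑ i, a i * u i))) *
        (exchangeMonomial v L X a * ((z ^ (∑ i, a i * u i) : Aˣ) : A)) := by
  set ω := Units.map (algebraMap K A).toMonoidHom (Units.mk0 v hv)
  have hω : ω ∈ Subgroup.center Aˣ := units_map_algebraMap_mem_center _
  have hval : ∀ n : ℤ, ((ω ^ n : Aˣ) : A) = algebraMap K A (v ^ n) :=
    val_units_map_algebraMap_zpow _
  have hzω : ∀ i, z * X i = ω ^ (2 * t i) * (X i * z) := fun i => Units.ext <| by
    rw [Units.val_mul, hz, Units.val_mul, Units.val_mul, hval, zpow_mul, zpow_ofNat]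
  have hXt' : Xt = fun i => ω ^ (t i * u i) * X i * z ^ u i := funext fun i => by
    rw [hXt, map_zpow]
  have hval_prod : ∀ Y : Fin r → Aˣ, ((List.finRange r).map fun i => ((Y i ^ a i : Aˣ) : A)).prod
      = (((List.finRange r).map fun i => Y i ^ a i).prod : A) := fun Y => by
    rw [← Units.coeHom_apply, map_list_prod, List.map_map]; rfl
  simp only [exchangeMonomial, hval_prod, hXt', list_prod_rescaled_zpow hω hzω,
    List.sumOrderedPairs_finRange, ← Fin.sum_univ_def, Units.val_mul, hval]
  rw [← mul_assoc, ← map_mul, ← zpow_add₀ hv, exchange_exponent_rescale t u a L Lt hLt,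
    zpow_add₀ hv, map_mul]
  simp only [mul_assoc]

end ExchangeMonomial

theorem sum_bplus_mul_eq_sum_bminus_mul {r : ℕ} {B : Matrix (Fin r) (Fin r) ℤ}
    (hB : B.transpose = -B) {k : Fin r} {bkp bkm : Fin r → ℤ}
    (hbkp : ∀ i, bkp i = if i = k then -1 else max (B i k) 0)
    (hbkm : ∀ i, bkm i = if i = k then -1 else max (-(B i k)) 0)
    {s : Fin r → ℤ} (hs : ∑ i, B k i * s i = 0) :
    ∑ i, bkp i * s i = ∑ i, bkm i * s i := by
  have hdiff : ∀ i, bkp i - bkm i = -B k i := fun i => by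
    have hskew : B k i = -B i k := by simpa using congrFun (congrFun hB i) k
    rw [hbkp, hbkm]
    split_ifs with h
    · subst h; omega
    · omega
  rw [← sub_eq_zero, ← Finset.sum_sub_distrib]
  simp only [← sub_mul, hdiff, neg_mul, Finset.sum_neg_distrib, hs, neg_zero]

theorem rescaled_seed_mutation_general (K : Type*) [Field K] (A : Type*) [Ring A]
    [Algebra K A] (v : K) (hv : v ≠ 0) (r : ℕ)
    (L : Matrix (Fin r) (Fin r) ℤ)
    (X : Fin r → Aˣ)
    (t u : Fin r → ℤ) (z : Aˣ)
    (hz : ∀ i, (z : A) * (X i : A) = algebraMap K A ((v ^ 2) ^ t i) * ((X i : A) * (z : A)))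
    (B : Matrix (Fin r) (Fin r) ℤ) (hB : B.transpose = -B) (k : Fin r)
    (hBt : ∑ i, B k i * t i = 0) (hBu : ∑ i, B k i * u i = 0)
    (Xt : Fin r → Aˣ)
    (hXt : ∀ i, Xt i =
      Units.map (algebraMap K A).toMonoidHom (Units.mk0 v hv ^ (t i * u i)) * X i * z ^ u i)
    (Lt : Matrix (Fin r) (Fin r) ℤ)
    (hLt : ∀ i j, Lt i j = L i j - (t i * u j - t j * u i))
    (M Mt : (Fin r → ℤ) → A)
    (hM : ∀ a, M a =
      algebraMap K A (v ^ (∑ i, ∑ j, if i < j then a i * a j * L j i else 0)) *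
        ((List.finRange r).map (fun i => ((X i ^ a i : Aˣ) : A))).prod)
    (hMt : ∀ a, Mt a =
      algebraMap K A (v ^ (∑ i, ∑ j, if i < j then a i * a j * Lt j i else 0)) *
        ((List.finRange r).map (fun i => ((Xt i ^ a i : Aˣ) : A))).prod)
    (bkp bkm : Fin r → ℤ)
    (hbkp : ∀ i, bkp i = if i = k then -1 else max (B i k) 0)
    (hbkm : ∀ i, bkm i = if i = k then -1 else max (-(B i k)) 0) :
    (∑ i, bkp i * t i) = (∑ i, bkm i * t i) ∧
    (∑ i, bkp i * u i) = (∑ i, bkm i * u i) ∧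
    Mt bkp + Mt bkm =
      algebraMap K A (v ^ ((∑ i, bkp i * t i) * (∑ i, bkp i * u i))) *
        ((M bkp + M bkm) * ((z ^ (∑ i, bkp i * u i) : Aˣ) : A)) := by
  have ht := sum_bplus_mul_eq_sum_bminus_mul hB hbkp hbkm hBt
  have hu := sum_bplus_mul_eq_sum_bminus_mul hB hbkp hbkm hBu
  have hM' : M = exchangeMonomial v L X := funext hM
  have hMt' : Mt = exchangeMonomial v Lt Xt := funext hMt
  refine ⟨ht, hu, ?_⟩
  rw [hM', hMt', exchangeMonomial_rescale hv hz hXt hLt, exchangeMonomial_rescale hv hz hXt hLt,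
    ← ht, ← hu, add_mul, mul_add]

/-- In the quantum torus setting with extending unit `z`, if `t` and `u`
are gradings in direction `k` (`B_k t = 0`, `B_k u = 0`), then mutation of the re-scaled
seed in direction `k` produces the re-scaling of the mutated variable:
`M̃(b_k^+) + M̃(b_k^-) = v^(t'_k u'_k) (M(b_k^+) + M(b_k^-)) z^(u'_k)` where
`t'_k = b_k^+ · t = b_k^- · t` and `u'_k = b_k^+ · u = b_k^- · u`. -/
theorem rescaled_seed_mutation (K : Type*) [Field K] (A : Type*) [Ring A]
    [Algebra K A] (v : K) (hv : v ≠ 0) (r : ℕ) (hr : 0 < r)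
    (L : Matrix (Fin r) (Fin r) ℤ) (hL : L.transpose = -L)
    (X : Fin r → Aˣ)
    (hX : ∀ i j, (X i : A) * (X j : A) =
      algebraMap K A ((v ^ 2) ^ L i j) * ((X j : A) * (X i : A)))
    (t u : Fin r → ℤ) (z : Aˣ)
    (hz : ∀ i, (z : A) * (X i : A) = algebraMap K A ((v ^ 2) ^ t i) * ((X i : A) * (z : A)))
    (B : Matrix (Fin r) (Fin r) ℤ) (hB : B.transpose = -B) (k : Fin r)
    (hBt : ∑ i, B k i * t i = 0) (hBu : ∑ i, B k i * u i = 0)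
    (Xt : Fin r → Aˣ)
    (hXt : ∀ i, Xt i =
      Units.map (algebraMap K A).toMonoidHom (Units.mk0 v hv ^ (t i * u i)) * X i * z ^ u i)
    (Lt : Matrix (Fin r) (Fin r) ℤ)
    (hLt : ∀ i j, Lt i j = L i j - (t i * u j - t j * u i))
    (M Mt : (Fin r → ℤ) → A)
    (hM : ∀ a, M a =
      algebraMap K A (v ^ (∑ i, ∑ j, if i < j then a i * a j * L j i else 0)) *
        ((List.finRange r).map (fun i => ((X i ^ a i : Aˣ) : A))).prod)
    (hMt : ∀ a, Mt a =
      algebraMap K A (v ^ (∑ i, ∑ j, if i < j then a i * a j * Lt j i else 0)) *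
        ((List.finRange r).map (fun i => ((Xt i ^ a i : Aˣ) : A))).prod)
    (bkp bkm : Fin r → ℤ)
    (hbkp : ∀ i, bkp i = if i = k then -1 else max (B i k) 0)
    (hbkm : ∀ i, bkm i = if i = k then -1 else max (-(B i k)) 0) :
    (∑ i, bkp i * t i) = (∑ i, bkm i * t i) ∧
    (∑ i, bkp i * u i) = (∑ i, bkm i * u i) ∧
    Mt bkp + Mt bkm =
      algebraMap K A (v ^ ((∑ i, bkp i * t i) * (∑ i, bkp i * u i))) *
        ((M bkp + M bkm) * ((z ^ (∑ i, bkp i * u i) : Aˣ) : A)) :=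
  rescaled_seed_mutation_general K A v hv r L X t u z hz B hB k hBt hBu Xt hXt Lt hLt M Mt hM hMt
    bkp bkm hbkp hbkm
end
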